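/- Let (Γ, I) have the unique simple path property, and let Δ be a strongly connected subgraph of u⇓ containing the vertex u. Then the closure of (Δ, u), i.e., the smallest subgraph containing Δ that is closed with respect to u, is strongly connected. -/
import Mathlib


structure DGraph : Type 1 where
  V : Type
  E : Type
  ι : E → V
  τ : E → V

namespace DGraph

/-- A directed path from `u` to `w` given by its list of edges. -/
inductive Path (G : DGraph) : G.V → G.V → List G.E → Prop
  | nil (v : G.V) : Path G v v []
  | cons (e : G.E) {w : G.V} {p : List G.E} :
      Path G (G.τ e) w p → Path G (G.ι e) w (e :: p)

/-- The list of vertices visited by a path `p` starting at `u`. -/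
def verts (G : DGraph) (u : G.V) (p : List G.E) : List G.V :=
  u :: p.map G.τ

/-- A simple directed path: a path visiting no vertex twice. -/
def SimplePath (G : DGraph) (u w : G.V) (p : List G.E) : Prop :=
  G.Path u w p ∧ (G.verts u p).Nodup

/-- `w` is reachable from `u` by a directed path. -/
def Reach (G : DGraph) (u w : G.V) : Prop := ∃ p, G.Path u w p

/-- A graph is rooted at `v` if every vertex is reachable from `v`. -/
def Rooted (G : DGraph) (v : G.V) : Prop := ∀ w, G.Reach v w

end DGraph


namespace DGraph

/-- A directed path from `u` to `w` all of whose edges lie in `ES`. -/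
def PathIn (G : DGraph) (ES : Set G.E) (u w : G.V) (p : List G.E) : Prop :=
  G.Path u w p ∧ ∀ e ∈ p, e ∈ ES

/-- A directed rooted subtree of `G` rooted at `v`, given by a vertex set `VS`
and an edge set `ES`: it is a subgraph containing `v` in which every vertex is
reached from `v` by a unique directed path. -/
def IsRootedSubtree (G : DGraph) (v : G.V) (VS : Set G.V) (ES : Set G.E) : Prop :=
  v ∈ VS ∧ (∀ e ∈ ES, G.ι e ∈ VS ∧ G.τ e ∈ VS) ∧
    ∀ w ∈ VS, ∃! p : List G.E, G.PathIn ES v w p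

/-- A directed spanning tree of `G` rooted at `v`. -/
def IsSpanningTree (G : DGraph) (v : G.V) (ES : Set G.E) : Prop :=
  G.IsRootedSubtree v Set.univ ES


/-- The vertex set of `u⇓`: vertices reachable from `u` within the tree `ES`. -/
def DownT (G : DGraph) (ES : Set G.E) (u : G.V) : Set G.V :=
  {w : G.V | ∃ p : List G.E, G.PathIn ES u w p}

/-- A subgraph `(VS, FS)` closed with respect to `u` (relative to the spanning
tree `ES`): it contains `u`, lies inside `u⇓`, contains the tree geodesic from
`u` to each of its vertices, and contains every bold arrow (edge outside `ES`)
whose terminal vertex lies in it and differs from `u`. -/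
def ClosedAt (G : DGraph) (ES : Set G.E) (u : G.V)
    (VS : Set G.V) (FS : Set G.E) : Prop :=
  u ∈ VS ∧ VS ⊆ G.DownT ES u ∧
    (∀ e ∈ FS, G.ι e ∈ VS ∧ G.τ e ∈ VS) ∧
    (∀ w ∈ VS, ∀ p : List G.E, G.PathIn ES u w p → ∀ e ∈ p, e ∈ FS) ∧
    (∀ e : G.E, e ∉ ES → G.τ e ∈ VS → G.τ e ≠ u → e ∈ FS)


section AuxLemmas
variable {G : DGraph}

theorem Path.append {a x b : G.V} {p₁ p₂ : List G.E}
    (h₁ : G.Path a x p₁) (h₂ : G.Path x b p₂) : G.Path a b (p₁ ++ p₂) := by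
  induction h₁ with
  | nil v => exact h₂
  | cons e h ih => exact Path.cons e (ih h₂)

theorem Path.split_at_vertex {a b x : G.V} {p : List G.E}
    (h : G.Path a b p) (hx : x ∈ G.verts a p) :
    ∃ p₁ p₂, p = p₁ ++ p₂ ∧ G.Path a x p₁ ∧ G.Path x b p₂ := by
  induction h with
  | nil v =>
      simp [verts] at hx
      subst hx
      exact ⟨[], [], rfl, .nil _, .nil _⟩
  | @cons e w' p' h ih =>
      by_cases hxe : x = G.ι e
      · subst hxe
        exact ⟨[], e :: p', rfl, .nil _, Path.cons e h⟩
      · have hx' : x ∈ G.verts (G.τ e) p' := by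
          simp [verts] at hx ⊢
          tauto
        obtain ⟨p₁, p₂, rfl, h₁, h₂⟩ := ih hx'
        exact ⟨e :: p₁, p₂, rfl, .cons e h₁, h₂⟩

theorem Path.split_at_edge {a b : G.V} {p : List G.E} {e : G.E}
    (h : G.Path a b p) (he : e ∈ p) :
    ∃ p₁ p₂, p = p₁ ++ e :: p₂ ∧ G.Path a (G.ι e) p₁ ∧ G.Path (G.τ e) b p₂ := by
  induction h with
  | nil v => simp at he
  | @cons f w' p' h ih =>
      rcases List.mem_cons.1 he with rfl | he'
      · exact ⟨[], p', rfl, .nil _, h⟩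
      · obtain ⟨p₁, p₂, rfl, h₁, h₂⟩ := ih he'
        exact ⟨f :: p₁, p₂, rfl, .cons f h₁, h₂⟩

theorem verts_append (a : G.V) (p₁ p₂ : List G.E) :
    G.verts a (p₁ ++ p₂) = G.verts a p₁ ++ p₂.map G.τ := by
  simp [verts]

theorem Path.verts_last {a x : G.V} {p : List G.E} (h : G.Path a x p) :
    ∃ ys, G.verts a p = ys ++ [x] := by
  induction h with
  | nil v => exact ⟨[], rfl⟩
  | cons e h ih =>
      obtain ⟨ys, hy⟩ := ih
      refine ⟨G.ι e :: ys, ?_⟩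
      simp only [verts, List.map_cons] at hy ⊢
      rw [hy]; rfl

theorem verts_suffix {a x : G.V} {p₁ p₂ : List G.E} (h : G.Path a x p₁) :
    G.verts x p₂ <:+ G.verts a (p₁ ++ p₂) := by
  obtain ⟨ys, hy⟩ := h.verts_last
  refine ⟨ys, ?_⟩
  rw [verts_append, hy]
  simp [verts]

theorem Path.toSimple {a b : G.V} {p : List G.E} (h : G.Path a b p) :
    ∃ q, G.SimplePath a b q ∧ ∀ e ∈ q, e ∈ p := by
  induction h with
  | nil v => exact ⟨[], ⟨.nil v, by simp [verts]⟩, by simp⟩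
  | cons e h ih =>
      obtain ⟨q, ⟨hq, hnd⟩, hsubq⟩ := ih
      by_cases hmem : G.ι e ∈ G.verts (G.τ e) q
      · obtain ⟨q₁, q₂, rfl, h₁, h₂⟩ := hq.split_at_vertex hmem
        refine ⟨q₂, ⟨h₂, hnd.sublist (verts_suffix h₁).sublist⟩,
          fun f hf => List.mem_cons_of_mem _ (hsubq f (by simp [hf]))⟩
      · refine ⟨e :: q, ⟨.cons e hq, ?_⟩, ?_⟩
        · have : G.verts (G.ι e) (e :: q) = G.ι e :: G.verts (G.τ e) q := by
            simp [verts]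
          rw [this]
          exact List.nodup_cons.2 ⟨hmem, hnd⟩
        · intro f hf
          rcases List.mem_cons.1 hf with rfl | hf'
          · simp
          · exact List.mem_cons_of_mem _ (hsubq f hf')

theorem treepath_nodup {v : G.V} {VS : Set G.V} {ES : Set G.E}
    (hT : G.IsRootedSubtree v VS ES) {w : G.V} {p : List G.E} (hw : w ∈ VS)
    (hp : G.PathIn ES v w p) : (G.verts v p).Nodup := by
  obtain ⟨q, ⟨hq, hnd⟩, hsubq⟩ := hp.1.toSimple
  obtain ⟨r, -, hun⟩ := hT.2.2 w hw
  have h1 : q = p :=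
    (hun q ⟨hq, fun e he => hp.2 e (hsubq e he)⟩).trans (hun p hp).symm
  rw [← h1]; exact hnd

theorem bold_into_down {I : G.V} {ES : Set G.E} {u : G.V}
    (hT : G.IsSpanningTree I ES)
    (huspp : ∀ w : G.V, ∃! p : List G.E, G.SimplePath I w p)
    (e : G.E) (he : e ∉ ES) (hw : G.τ e ∈ G.DownT ES u) :
    G.ι e ∈ G.DownT ES u := by
  obtain ⟨q₂, hq₂⟩ := hw
  obtain ⟨q₁, hq₁, -⟩ := hT.2.2 u trivial
  obtain ⟨r, hr, -⟩ := hT.2.2 (G.ι e) trivial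
  have hq : G.PathIn ES I (G.τ e) (q₁ ++ q₂) :=
    ⟨hq₁.1.append hq₂.1, fun f hf => by
      rcases List.mem_append.1 hf with h | h
      exacts [hq₁.2 f h, hq₂.2 f h]⟩
  have hqs : G.SimplePath I (G.τ e) (q₁ ++ q₂) := ⟨hq.1, treepath_nodup hT trivial hq⟩
  have hrnd : (G.verts I r).Nodup := treepath_nodup hT trivial hr
  have hre : G.Path I (G.τ e) (r ++ [e]) :=
    hr.1.append (Path.cons e (.nil _))
  have hmem : G.τ e ∈ G.verts I r := by
    by_contra hmem
    have hnd : (G.verts I (r ++ [e])).Nodup := by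
      rw [verts_append]
      simp only [List.map_cons, List.map_nil]
      exact List.Nodup.append hrnd (List.nodup_singleton _)
        (by simpa [List.disjoint_singleton] using hmem)
    obtain ⟨s, -, hus⟩ := huspp (G.τ e)
    have heq : r ++ [e] = q₁ ++ q₂ := (hus _ ⟨hre, hnd⟩).trans (hus _ hqs).symm
    have : e ∈ q₁ ++ q₂ := heq ▸ (by simp)
    rcases List.mem_append.1 this with h | h
    exacts [he (hq₁.2 e h), he (hq₂.2 e h)]
  obtain ⟨r₁, r₂, rfl, -, h₂⟩ := hr.1.split_at_vertex hmem
  exact ⟨q₂ ++ r₂, hq₂.1.append h₂, fun f hf => by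
    rcases List.mem_append.1 hf with h | h
    exacts [hq₂.2 f h, hr.2 f (by simp [h])]⟩

end AuxLemmas

/-- The closure of a strongly connected subgraph `(Δ, u)` of `u⇓` (the
smallest subgraph containing `Δ` that is closed with respect to `u`) is
strongly connected. -/
theorem closure_strongly_connected (G : DGraph) (I : G.V)
    (hroot : G.Rooted I)
    (huspp : ∀ w : G.V, ∃! p : List G.E, G.SimplePath I w p)
    (ES : Set G.E) (hT : G.IsSpanningTree I ES) (u : G.V)
    (VD : Set G.V) (FD : Set G.E)
    (hsub : ∀ e ∈ FD, G.ι e ∈ VD ∧ G.τ e ∈ VD)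
    (hdown : VD ⊆ G.DownT ES u) (hu : u ∈ VD)
    (hsc : ∀ a ∈ VD, ∀ b ∈ VD,
      ∃ p : List G.E, G.Path a b p ∧ ∀ e ∈ p, e ∈ FD) :
    ∀ a ∈ {w : G.V | ∀ (VS : Set G.V) (FS : Set G.E),
        G.ClosedAt ES u VS FS → VD ⊆ VS → FD ⊆ FS → w ∈ VS},
      ∀ b ∈ {w : G.V | ∀ (VS : Set G.V) (FS : Set G.E),
        G.ClosedAt ES u VS FS → VD ⊆ VS → FD ⊆ FS → w ∈ VS},
        ∃ p : List G.E, G.Path a b p ∧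
          ∀ e ∈ p, e ∈ {f : G.E | ∀ (VS : Set G.V) (FS : Set G.E),
            G.ClosedAt ES u VS FS → VD ⊆ VS → FD ⊆ FS → f ∈ FS} := by
  intro a ha b hb
  -- abbreviations for closure membership
  set VC : Set G.V := {w : G.V | ∀ (VS : Set G.V) (FS : Set G.E),
      G.ClosedAt ES u VS FS → VD ⊆ VS → FD ⊆ FS → w ∈ VS} with hVC
  set FC : Set G.E := {f : G.E | ∀ (VS : Set G.V) (FS : Set G.E),
      G.ClosedAt ES u VS FS → VD ⊆ VS → FD ⊆ FS → f ∈ FS} with hFC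
  -- a concrete closed subgraph containing (VD, FD)
  have hclosed0 : G.ClosedAt ES u (G.DownT ES u)
      {e : G.E | G.ι e ∈ G.DownT ES u ∧ G.τ e ∈ G.DownT ES u} := by
    refine ⟨⟨[], .nil u, by simp⟩, fun _ h => h, fun e he => he, ?_, ?_⟩
    · intro w hw p hp e hep
      obtain ⟨p₁, p₂, rfl, h₁, h₂⟩ := hp.1.split_at_edge hep
      refine ⟨⟨p₁, h₁, fun f hf => hp.2 f (by simp [hf])⟩,
        ⟨p₁ ++ [e], h₁.append (Path.cons e (.nil _)), fun f hf => ?_⟩⟩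
      rcases List.mem_append.1 hf with h | h
      · exact hp.2 f (by simp [h])
      · simp at h; subst h; exact hp.2 f (by simp)
    · intro e he hτ _
      exact ⟨bold_into_down hT huspp e he hτ, hτ⟩
  have hFD0 : FD ⊆ {e : G.E | G.ι e ∈ G.DownT ES u ∧ G.τ e ∈ G.DownT ES u} :=
    fun e he => ⟨hdown (hsub e he).1, hdown (hsub e he).2⟩
  -- every closure vertex lies in u⇓
  have hVCdown : ∀ w ∈ VC, w ∈ G.DownT ES u := fun w hw =>
    hw (G.DownT ES u) _ hclosed0 hdown hFD0
  -- endpoints of closure edges are closure vertices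
  have hFCend : ∀ e ∈ FC, G.ι e ∈ VC ∧ G.τ e ∈ VC := fun e he =>
    ⟨fun VS FS hc h1 h2 => (hc.2.2.1 e (he VS FS hc h1 h2)).1,
     fun VS FS hc h1 h2 => (hc.2.2.1 e (he VS FS hc h1 h2)).2⟩
  -- geodesic edges to closure vertices are closure edges
  have hgeo : ∀ w ∈ VC, ∀ p : List G.E, G.PathIn ES u w p → ∀ e ∈ p, e ∈ FC :=
    fun w hw p hp e hep VS FS hc h1 h2 =>
      hc.2.2.2.1 w (hw VS FS hc h1 h2) p hp e hep
  have huVC : u ∈ VC := fun VS FS hc h1 h2 => h1 hu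
  have hFDFC : FD ⊆ FC := fun f hf VS FS hc h1 h2 => h2 hf
  -- the subgraph of the closure consisting of vertices that reach u
  set S : Set G.V := {w : G.V | w ∈ VC ∧ ∃ p : List G.E,
      G.Path w u p ∧ ∀ e ∈ p, e ∈ FC} with hS
  set FS' : Set G.E := {e : G.E | e ∈ FC ∧ G.ι e ∈ S ∧ G.τ e ∈ S} with hFS'
  have hSclosed : G.ClosedAt ES u S FS' := by
    refine ⟨⟨huVC, [], .nil u, by simp⟩, fun w hw => hVCdown w hw.1,
      fun e he => ⟨he.2.1, he.2.2⟩, ?_, ?_⟩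
    · intro w hw p hp e hep
      have heFC : e ∈ FC := hgeo w hw.1 p hp e hep
      obtain ⟨p₁, p₂, rfl, h₁, h₂⟩ := hp.1.split_at_edge hep
      obtain ⟨pw, hpw, hpwFC⟩ := hw.2
      have hp₂FC : ∀ f ∈ p₂, f ∈ FC := fun f hf =>
        hgeo w hw.1 _ hp f (by simp [hf])
      refine ⟨heFC, ⟨(hFCend e heFC).1, (e :: p₂) ++ pw,
        (Path.cons e h₂).append hpw, fun f hf => ?_⟩,
        ⟨(hFCend e heFC).2, p₂ ++ pw, h₂.append hpw, fun f hf => ?_⟩⟩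
      · rcases List.mem_append.1 hf with h | h
        · rcases List.mem_cons.1 h with rfl | h'
          exacts [heFC, hp₂FC f h']
        · exact hpwFC f h
      · rcases List.mem_append.1 hf with h | h
        exacts [hp₂FC f h, hpwFC f h]
    · intro e he hτ hne
      have heFC : e ∈ FC := fun VS FS hc h1 h2 =>
        hc.2.2.2.2 e he (hτ.1 VS FS hc h1 h2) hne
      obtain ⟨pw, hpw, hpwFC⟩ := hτ.2
      refine ⟨heFC, ⟨(hFCend e heFC).1, e :: pw, Path.cons e hpw, fun f hf => ?_⟩, hτ⟩
      rcases List.mem_cons.1 hf with rfl | h'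
      exacts [heFC, hpwFC f h']
  have hVDS : VD ⊆ S := by
    intro x hx
    obtain ⟨p, hp, hpFD⟩ := hsc x hx u hu
    exact ⟨fun VS FS hc h1 h2 => h1 hx, p, hp, fun f hf => hFDFC (hpFD f hf)⟩
  have hFDS : FD ⊆ FS' := fun f hf =>
    ⟨hFDFC hf, hVDS (hsub f hf).1, hVDS (hsub f hf).2⟩
  -- conclude
  obtain ⟨-, pa, hpa, hpaFC⟩ := ha S FS' hSclosed hVDS hFDS
  obtain ⟨qb, hqb⟩ := hVCdown b hb
  have hqbFC : ∀ f ∈ qb, f ∈ FC := hgeo b hb qb hqb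
  exact ⟨pa ++ qb, hpa.append hqb.1, fun f hf => by
    rcases List.mem_append.1 hf with h | h
    exacts [hpaFC f h, hqbFC f h]⟩

end DGraph
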